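/- Let N ≥ 3 be a natural number, let α_L = (2N² − 2N√(N²−2N+2) + N − 1)/(4N² − 5N + 1), and let α be a real number with α_L < α ≤ 1/(N−1). Consider the set of real numbers of the form (a_{10}+a_{11})·∏_{i=2}^N a_{i0} + Σ_{i=2}^N (α·a_{10}−a_{11})·a_{i1}, where all variables a_{10}, a_{11}, a_{i0}, a_{i1} range over {−1, 1}. Then 2 − (N−1)(α−1) is the greatest element of this set (it is an upper bound and it is attained). -/
import Mathlib


open BigOperators Finset

/-- Classical (local hidden variable) bound, regime `α_L < α ≤ 1/(N−1)`:
`2 − (N−1)(α−1)` is the greatest value of the Bell expression over deterministic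
`±1`-assignments, where
`α_L = (2N² − 2N√(N²−2N+2) + N − 1)/(4N² − 5N + 1)`. -/
theorem lhv_bound_small_alpha (N : ℕ) (hN : 3 ≤ N) (α : ℝ)
    (hαL : (2 * (N : ℝ) ^ 2 - 2 * (N : ℝ) * Real.sqrt ((N : ℝ) ^ 2 - 2 * (N : ℝ) + 2)
              + (N : ℝ) - 1) / (4 * (N : ℝ) ^ 2 - 5 * (N : ℝ) + 1) < α)
    (hα : α ≤ 1 / ((N : ℝ) - 1)) :
    IsGreatest
      { x : ℝ | ∃ a : Fin N → Fin 2 → ℝ,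
          (∀ i j, a i j = 1 ∨ a i j = -1) ∧
          x = (a ⟨0, by omega⟩ 0 + a ⟨0, by omega⟩ 1)
                * ∏ i ∈ univ.filter (fun i : Fin N => i ≠ ⟨0, by omega⟩), a i 0
              + ∑ i ∈ univ.filter (fun i : Fin N => i ≠ ⟨0, by omega⟩),
                  (α * a ⟨0, by omega⟩ 0 - a ⟨0, by omega⟩ 1) * a i 1 }
      (2 - ((N : ℝ) - 1) * (α - 1)) := by
  have hN3 : (3:ℝ) ≤ (N:ℝ) := by exact_mod_cast hN
  have hNpos : (0:ℝ) < (N:ℝ) - 1 := by linarith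
  set z : Fin N := ⟨0, by omega⟩ with hz
  have hcard : (univ.filter (fun i : Fin N => i ≠ z)).card = N - 1 := by
    rw [Finset.filter_ne', Finset.card_erase_of_mem (mem_univ _), card_univ, Fintype.card_fin]
  have hcardR : ((univ.filter (fun i : Fin N => i ≠ z)).card : ℝ) = (N:ℝ) - 1 := by
    rw [hcard, Nat.cast_sub (by omega)]; norm_num
  have hNα : α * ((N:ℝ) - 1) ≤ 1 := (le_div_iff₀ hNpos).mp hα
  have hα1 : α ≤ 1 := by nlinarith
  -- α > 0
  have hsqrt : Real.sqrt ((N:ℝ)^2 - 2*(N:ℝ) + 2) ≤ (N:ℝ) := by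
    have h1 : (N:ℝ)^2 - 2*(N:ℝ) + 2 ≤ (N:ℝ)^2 := by nlinarith
    calc Real.sqrt ((N:ℝ)^2 - 2*(N:ℝ) + 2) ≤ Real.sqrt ((N:ℝ)^2) := Real.sqrt_le_sqrt h1
      _ = (N:ℝ) := Real.sqrt_sq (by linarith)
  have hαpos : 0 < α := by
    have hden : (0:ℝ) < 4 * (N:ℝ)^2 - 5 * (N:ℝ) + 1 := by nlinarith
    have hnum : (0:ℝ) < 2 * (N:ℝ)^2 - 2 * (N:ℝ) * Real.sqrt ((N:ℝ)^2 - 2*(N:ℝ) + 2)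
        + (N:ℝ) - 1 := by nlinarith
    exact lt_trans (div_pos hnum hden) hαL
  constructor
  · refine ⟨fun i j => if i = z then 1 else if j = 0 then 1 else -1, ?_, ?_⟩
    · intro i j; dsimp only; split_ifs <;> norm_num
    · dsimp only
      rw [if_pos rfl, if_pos rfl]
      have hprod : ∏ i ∈ univ.filter (fun i : Fin N => i ≠ z),
          (if i = z then (1:ℝ) else if (0:Fin 2) = 0 then 1 else -1) = 1 := by
        apply Finset.prod_eq_one
        intro i hi
        simp only [mem_filter] at hi
        simp [hi.2]
      have hsum : ∑ i ∈ univ.filter (fun i : Fin N => i ≠ z),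
          (α * 1 - 1) * (if i = z then (1:ℝ) else if (1:Fin 2) = 0 then 1 else -1)
          = ((N:ℝ) - 1) * (1 - α) := by
        have : ∀ i ∈ univ.filter (fun i : Fin N => i ≠ z),
            (α * 1 - 1) * (if i = z then (1:ℝ) else if (1:Fin 2) = 0 then 1 else -1)
            = 1 - α := by
          intro i hi
          simp only [mem_filter] at hi
          have h2 : (1 : Fin 2) ≠ 0 := by decide
          rw [if_neg hi.2, if_neg h2]; ring
        rw [Finset.sum_congr rfl this, Finset.sum_const, nsmul_eq_mul, hcardR]
      rw [hprod, hsum]; ring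
  · rintro x ⟨a, ha, rfl⟩
    have habs : ∀ i j, |a i j| = 1 := fun i j => by rcases ha i j with h|h <;> simp [h]
    have hP : |∏ i ∈ univ.filter (fun i : Fin N => i ≠ z), a i 0| = 1 := by
      rw [Finset.abs_prod]; exact Finset.prod_eq_one fun i _ => habs i 0
    have h1 : (a z 0 + a z 1) * ∏ i ∈ univ.filter (fun i : Fin N => i ≠ z), a i 0
        ≤ |a z 0 + a z 1| := by
      calc _ ≤ |(a z 0 + a z 1) * ∏ i ∈ univ.filter (fun i : Fin N => i ≠ z), a i 0| :=
            le_abs_self _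
        _ = |a z 0 + a z 1| * |∏ i ∈ univ.filter (fun i : Fin N => i ≠ z), a i 0| := abs_mul _ _
        _ = |a z 0 + a z 1| := by rw [hP, mul_one]
    have h2 : ∑ i ∈ univ.filter (fun i : Fin N => i ≠ z), (α * a z 0 - a z 1) * a i 1
        ≤ ((N:ℝ) - 1) * |α * a z 0 - a z 1| := by
      calc ∑ i ∈ univ.filter (fun i : Fin N => i ≠ z), (α * a z 0 - a z 1) * a i 1
          ≤ ∑ i ∈ univ.filter (fun i : Fin N => i ≠ z), |α * a z 0 - a z 1| := by
            apply Finset.sum_le_sum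
            intro i hi
            calc _ ≤ |(α * a z 0 - a z 1) * a i 1| := le_abs_self _
              _ = |α * a z 0 - a z 1| * |a i 1| := abs_mul _ _
              _ = |α * a z 0 - a z 1| := by rw [habs, mul_one]
        _ = ((N:ℝ) - 1) * |α * a z 0 - a z 1| := by
            rw [Finset.sum_const, nsmul_eq_mul, hcardR]
    clear hαL hsqrt hP habs hα hcard hcardR
    rcases ha z 0 with h00 | h00 <;> rcases ha z 1 with h01 | h01 <;>
      rw [h00, h01] at h1 h2 ⊢ <;>
      [ (have e1 : |(1:ℝ) + 1| = 2 := by norm_num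
         have e2 : |α * 1 - 1| = 1 - α := by rw [mul_one, abs_of_nonpos (by linarith)]; ring);
        (have e1 : |(1:ℝ) + -1| = 0 := by norm_num
         have e2 : |α * 1 - -1| = α + 1 := by rw [mul_one, abs_of_nonneg (by linarith)]; ring);
        (have e1 : |(-1:ℝ) + 1| = 0 := by norm_num
         have e2 : |α * -1 - 1| = α + 1 := by rw [abs_of_nonpos (by nlinarith)]; ring);
        (have e1 : |(-1:ℝ) + -1| = 2 := by norm_num
         have e2 : |α * -1 - -1| = 1 - α := by rw [abs_of_nonneg (by nlinarith)]; ring)] <;>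
      (rw [e1] at h1; rw [e2] at h2) <;> nlinarith [h1, h2, hNα]
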